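/- Let l be a symmetric norm, v ∈ ℝ^d with layer vector L(v) having at most P nonempty layers, and β ∈ (0,1]. Let L*(v) be L(v) with all layers that are not β-contributing removed (set to zero). Then (1 − P·β)·l(L(v)) ≤ l(L*(v)) ≤ l(L(v)). -/

import Mathlib

def IsSymmetricNorm {d : ℕ} (l : (Fin d → ℝ) → ℝ) : Prop :=
  (∀ x y, l (x + y) ≤ l x + l y) ∧
  (∀ (c : ℝ) (x), l (c • x) = |c| * l x) ∧
  (∀ x, x ≠ 0 → 0 < l x) ∧
  (∀ (σ : Equiv.Perm (Fin d)) (x), l (fun i => x (σ i)) = l x) ∧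
  (∀ x, l (fun i => |x i|) = l x)

def IsLayerVec {d : ℕ} (α : ℝ) (P : ℕ) (b : ℕ → ℕ) (w : Fin d → ℝ) : Prop :=
  (∀ k ∈ Finset.Icc 1 P, (Finset.univ.filter fun j => w j = α ^ k).card = b k) ∧
  (∀ j, w j = 0 ∨ ∃ k ∈ Finset.Icc 1 P, w j = α ^ k)

section Aux

open Finset

variable {d : ℕ} {l : (Fin d → ℝ) → ℝ}

lemma sn_zero (hl : IsSymmetricNorm l) : l 0 = 0 := by
  have h := hl.2.1 0 (0 : Fin d → ℝ)
  simpa using h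

lemma sn_nonneg (hl : IsSymmetricNorm l) (x : Fin d → ℝ) : 0 ≤ l x := by
  by_cases h : x = 0
  · rw [h, sn_zero hl]
  · exact (hl.2.2.1 x h).le

lemma sn_update_le (hl : IsSymmetricNorm l) (x : Fin d → ℝ) (hx : ∀ j, 0 ≤ x j)
    (i : Fin d) (c : ℝ) (hc0 : 0 ≤ c) (hci : c ≤ x i) :
    l (Function.update x i c) ≤ l x := by
  rcases eq_or_lt_of_le (hx i) with h0 | hpos
  · have hc : c = 0 := le_antisymm (h0 ▸ hci) hc0
    rw [hc, h0, Function.update_eq_self]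
  · set a := x i with ha
    set t : ℝ := (a + c) / (2 * a) with ht
    have h2a : (0:ℝ) < 2 * a := by linarith
    have ht0 : 0 ≤ t := div_nonneg (by linarith) h2a.le
    have ht1 : t ≤ 1 := (div_le_one h2a).2 (by linarith)
    set xneg : Fin d → ℝ := Function.update x i (-a) with hxneg
    have hane : a ≠ 0 := ne_of_gt hpos
    have hta : t * a + (1 - t) * (-a) = c := by
      rw [ht]
      field_simp
      ring
    have hdecomp : Function.update x i c = t • x + (1 - t) • xneg := by
      funext j
      by_cases hj : j = i
      · subst hj
        simp only [Function.update_self, Pi.add_apply, Pi.smul_apply, smul_eq_mul, hxneg,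
          Function.update_self]
        rw [← ha]
        linarith [hta]
      · simp only [Function.update_of_ne hj, Pi.add_apply, Pi.smul_apply, smul_eq_mul, hxneg,
          Function.update_of_ne hj]
        ring
    have hnegeq : l xneg = l x := by
      have h1 : (fun j => |xneg j|) = (fun j => |x j|) := by
        funext j
        by_cases hj : j = i
        · subst hj; simp [hxneg, abs_of_nonneg (hx j), abs_of_pos hpos, ha]
        · simp [hxneg, Function.update_of_ne hj]
      calc l xneg = l (fun j => |xneg j|) := (hl.2.2.2.2 xneg).symm
        _ = l (fun j => |x j|) := by rw [h1]
        _ = l x := hl.2.2.2.2 x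
    calc l (Function.update x i c) = l (t • x + (1 - t) • xneg) := by rw [hdecomp]
      _ ≤ l (t • x) + l ((1 - t) • xneg) := hl.1 _ _
      _ = t * l x + (1 - t) * l xneg := by
          rw [hl.2.1, hl.2.1, abs_of_nonneg ht0, abs_of_nonneg (by linarith : (0:ℝ) ≤ 1 - t)]
      _ = l x := by rw [hnegeq]; ring

lemma sn_mono (hl : IsSymmetricNorm l) (x y : Fin d → ℝ) (hx : ∀ j, 0 ≤ x j)
    (hxy : ∀ j, x j ≤ y j) : l x ≤ l y := by
  classical
  have key : ∀ s : Finset (Fin d), l (fun j => if j ∈ s then x j else y j) ≤ l y := by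
    intro s
    induction s using Finset.induction_on with
    | empty => simp
    | @insert i s hi ih =>
      have heq : (fun j => if j ∈ insert i s then x j else y j)
          = Function.update (fun j => if j ∈ s then x j else y j) i (x i) := by
        funext j
        by_cases hj : j = i
        · subst hj; simp
        · simp [Function.update_of_ne hj, Finset.mem_insert, hj]
      rw [heq]
      refine le_trans (sn_update_le hl _ (fun j => ?_) i (x i) (hx i) ?_) ih
      · by_cases hj : j ∈ s <;> simp [hj, hx j, le_trans (hx j) (hxy j)]
      · simp [hi, hxy i]
  have := key Finset.univ
  simpa using this

lemma sn_sum_le (hl : IsSymmetricNorm l) {ι : Type*} (T : Finset ι) (g : ι → Fin d → ℝ) :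
    l (∑ k ∈ T, g k) ≤ ∑ k ∈ T, l (g k) := by
  classical
  induction T using Finset.induction_on with
  | empty => simp [sn_zero hl]
  | @insert i s hi ih =>
    rw [Finset.sum_insert hi, Finset.sum_insert hi]
    exact le_trans (hl.1 _ _) (by linarith)

lemma sn_eq_of_counts (hl : IsSymmetricNorm l) (x y : Fin d → ℝ)
    (h : ∀ v : ℝ, (Finset.univ.filter fun j => x j = v).card
      = (Finset.univ.filter fun j => y j = v).card) :
    l x = l y := by
  classical
  have hcnt : ∀ (z : Fin d → ℝ) (v : ℝ), Multiset.count v (Multiset.map z Finset.univ.val)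
      = (Finset.univ.filter fun j => z j = v).card := by
    intro z v
    rw [Multiset.count_map]
    simp only [Finset.card, Finset.filter_val]
    congr 1
    exact Multiset.filter_congr (fun a _ => eq_comm)
  have hM : Multiset.map x Finset.univ.val = Multiset.map y Finset.univ.val := by
    ext v
    rw [hcnt, hcnt]
    exact h v
  rw [Fin.univ_val_map, Fin.univ_val_map] at hM
  have hperm : (List.ofFn x).Perm (List.ofFn y) := Multiset.coe_eq_coe.mp hM
  have hsorted : x ∘ Tuple.sort x = y ∘ Tuple.sort y := by
    apply List.ofFn_injective
    refine List.Perm.eq_of_sortedLE (List.sortedLE_ofFn_iff.mpr (Tuple.monotone_sort x))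
      (List.sortedLE_ofFn_iff.mpr (Tuple.monotone_sort y)) ?_
    exact ((Equiv.Perm.ofFn_comp_perm _ x).trans hperm).trans
      (Equiv.Perm.ofFn_comp_perm _ y).symm
  calc l x = l (x ∘ Tuple.sort x) := (hl.2.2.2.1 (Tuple.sort x) x).symm
    _ = l (y ∘ Tuple.sort y) := by rw [hsorted]
    _ = l y := hl.2.2.2.1 (Tuple.sort y) y

/-- Equal counts at every value, derived from equal layer counts. -/
lemma counts_eq_all {α : ℝ} {P : ℕ} (hα : 1 < α) (x y : Fin d → ℝ)
    (hx2 : ∀ j, x j = 0 ∨ ∃ k ∈ Finset.Icc 1 P, x j = α ^ k)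
    (hy2 : ∀ j, y j = 0 ∨ ∃ k ∈ Finset.Icc 1 P, y j = α ^ k)
    (hc : ∀ k ∈ Finset.Icc 1 P, (Finset.univ.filter fun j => x j = α ^ k).card
      = (Finset.univ.filter fun j => y j = α ^ k).card) :
    ∀ v : ℝ, (Finset.univ.filter fun j => x j = v).card
      = (Finset.univ.filter fun j => y j = v).card := by
  classical
  have hpos : ∀ k : ℕ, (0:ℝ) < α ^ k := fun k => pow_pos (lt_trans zero_lt_one hα) k
  have hmono : StrictMono fun k : ℕ => α ^ k := fun _ _ h => by exact pow_lt_pow_right₀ hα h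
  have hinj : ∀ {k k' : ℕ}, α ^ k = α ^ k' → k = k' := fun h => hmono.injective h
  intro v
  by_cases hv : ∃ k ∈ Finset.Icc 1 P, v = α ^ k
  · obtain ⟨k, hk, rfl⟩ := hv
    exact hc k hk
  · by_cases hv0 : v = 0
    · subst hv0
      have key : ∀ z : Fin d → ℝ, (∀ j, z j = 0 ∨ ∃ k ∈ Finset.Icc 1 P, z j = α ^ k) →
          (Finset.univ.filter fun j => z j = 0).card
            + ∑ k ∈ Finset.Icc 1 P, (Finset.univ.filter fun j => z j = α ^ k).card = d := by
        intro z hz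
        have hdis : ∀ k ∈ Finset.Icc 1 P, ∀ k' ∈ Finset.Icc 1 P, k ≠ k' →
            Disjoint (Finset.univ.filter fun j => z j = α ^ k)
              (Finset.univ.filter fun j => z j = α ^ k') := by
          intro k _ k' _ hkk'
          rw [Finset.disjoint_left]
          intro j hj hj'
          simp only [Finset.mem_filter, Finset.mem_univ, true_and] at hj hj'
          exact hkk' (hinj (hj.symm.trans hj'))
        have hbi : ((Finset.Icc 1 P).biUnion fun k => Finset.univ.filter fun j => z j = α ^ k).card
            = ∑ k ∈ Finset.Icc 1 P, (Finset.univ.filter fun j => z j = α ^ k).card :=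
          Finset.card_biUnion hdis
        have hun : (Finset.univ : Finset (Fin d)) = (Finset.univ.filter fun j => z j = 0)
            ∪ ((Finset.Icc 1 P).biUnion fun k => Finset.univ.filter fun j => z j = α ^ k) := by
          ext j
          simp only [Finset.mem_univ, Finset.mem_union, Finset.mem_filter, Finset.mem_biUnion,
            true_and, true_iff]
          rcases hz j with h | ⟨k, hk, h⟩
          · exact Or.inl h
          · exact Or.inr ⟨k, hk, h⟩
        have hdis2 : Disjoint (Finset.univ.filter fun j => z j = 0)
            ((Finset.Icc 1 P).biUnion fun k => Finset.univ.filter fun j => z j = α ^ k) := by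
          rw [Finset.disjoint_left]
          intro j hj hj'
          simp only [Finset.mem_filter, Finset.mem_univ, true_and, Finset.mem_biUnion] at hj hj'
          obtain ⟨k, _, hk⟩ := hj'
          exact (hpos k).ne' (hk.symm.trans hj)
        calc (Finset.univ.filter fun j => z j = 0).card
              + ∑ k ∈ Finset.Icc 1 P, (Finset.univ.filter fun j => z j = α ^ k).card
            = (Finset.univ.filter fun j => z j = 0).card
              + ((Finset.Icc 1 P).biUnion fun k =>
                  Finset.univ.filter fun j => z j = α ^ k).card := by rw [hbi]
          _ = ((Finset.univ.filter fun j => z j = 0)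
              ∪ ((Finset.Icc 1 P).biUnion fun k =>
                  Finset.univ.filter fun j => z j = α ^ k)).card :=
              (Finset.card_union_of_disjoint hdis2).symm
          _ = d := by rw [← hun]; simp
      have hx' := key x hx2
      have hy' := key y hy2
      have hsum : ∑ k ∈ Finset.Icc 1 P, (Finset.univ.filter fun j => x j = α ^ k).card
          = ∑ k ∈ Finset.Icc 1 P, (Finset.univ.filter fun j => y j = α ^ k).card :=
        Finset.sum_congr rfl hc
      omega
    · have hx0 : (Finset.univ.filter fun j => x j = v) = ∅ := by
        rw [Finset.filter_eq_empty_iff]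
        intro j _ hj
        rcases hx2 j with h | ⟨k, hk, h⟩
        · exact hv0 (hj.symm.trans h)
        · exact hv ⟨k, hk, hj.symm.trans h⟩
      have hy0 : (Finset.univ.filter fun j => y j = v) = ∅ := by
        rw [Finset.filter_eq_empty_iff]
        intro j _ hj
        rcases hy2 j with h | ⟨k, hk, h⟩
        · exact hv0 (hj.symm.trans h)
        · exact hv ⟨k, hk, hj.symm.trans h⟩
      rw [hx0, hy0]

open Classical in
/-- `LV` with only the layers in `U` kept. -/
noncomputable def layerSel {d : ℕ} (α : ℝ) (LV : Fin d → ℝ) (U : Finset ℕ) : Fin d → ℝ :=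
  fun j => if ∃ k ∈ U, LV j = α ^ k then LV j else 0

end Aux

/-- Removing all non-`β`-contributing layers of the layer vector `L(v)` (giving `L*(v)`,
here `W`) satisfies `(1 − P·β)·l(L(v)) ≤ l(L*(v)) ≤ l(L(v))`.
Here `LVk k` is the layer vector keeping only layer `k` (i.e. `L_k(v)`), `S` is the set of
`β`-contributing layers, i.e. those `k` with `l(L_k(v)) ≥ β·l(L(v))`. -/
theorem stmt7 {d : ℕ} (l : (Fin d → ℝ) → ℝ) (hl : IsSymmetricNorm l)
    (α β : ℝ) (hα : 1 < α) (hβ0 : 0 < β) (hβ1 : β ≤ 1)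
    (P : ℕ) (b : ℕ → ℕ) (LV W : Fin d → ℝ) (LVk : ℕ → Fin d → ℝ) (S : Finset ℕ)
    (hLV : IsLayerVec α P b LV)
    (hLVk : ∀ k ∈ Finset.Icc 1 P,
      IsLayerVec α P (fun j => if j = k then b k else 0) (LVk k))
    (hS : ∀ k ∈ Finset.Icc 1 P, (k ∈ S ↔ β * l LV ≤ l (LVk k)))
    (hW : IsLayerVec α P (fun k => if k ∈ S then b k else 0) W) :
    (1 - (P : ℝ) * β) * l LV ≤ l W ∧ l W ≤ l LV := by
  classical
  have hpos : ∀ k : ℕ, (0:ℝ) < α ^ k := fun k => pow_pos (lt_trans zero_lt_one hα) k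
  have hmono : StrictMono fun k : ℕ => α ^ k := fun _ _ h => by exact pow_lt_pow_right₀ hα h
  have hinj : ∀ {k k' : ℕ}, α ^ k = α ^ k' → k = k' := fun h => hmono.injective h
  have hLVnn : ∀ j, 0 ≤ LV j := by
    intro j
    rcases hLV.2 j with h | ⟨k, _, h⟩
    · rw [h]
    · rw [h]; exact (hpos k).le
  -- basic facts about layerSel
  have hXval : ∀ (U : Finset ℕ) (j : Fin d),
      layerSel α LV U j = 0 ∨ layerSel α LV U j = LV j := by
    intro U j
    unfold layerSel
    by_cases h : ∃ k ∈ U, LV j = α ^ k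
    · exact Or.inr (if_pos h)
    · exact Or.inl (if_neg h)
  have hXnn : ∀ (U : Finset ℕ) (j : Fin d), 0 ≤ layerSel α LV U j := by
    intro U j
    rcases hXval U j with h | h <;> rw [h]
    exact hLVnn j
  have hXle : ∀ (U : Finset ℕ) (j : Fin d), layerSel α LV U j ≤ LV j := by
    intro U j
    rcases hXval U j with h | h <;> rw [h]
    exact hLVnn j
  -- evaluation of layerSel
  have hXeval0 : ∀ (U : Finset ℕ) (j : Fin d), LV j = 0 → layerSel α LV U j = 0 := by
    intro U j h0
    unfold layerSel
    apply if_neg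
    rintro ⟨k, _, he⟩
    exact (hpos k).ne' (he.symm.trans h0)
  have hXeval : ∀ (U : Finset ℕ) (j : Fin d) (k0 : ℕ), LV j = α ^ k0 →
      layerSel α LV U j = if k0 ∈ U then LV j else 0 := by
    intro U j k0 he
    unfold layerSel
    by_cases hk0 : k0 ∈ U
    · rw [if_pos hk0, if_pos ⟨k0, hk0, he⟩]
    · rw [if_neg hk0]
      apply if_neg
      rintro ⟨k, hk, he'⟩
      have hkk : k = k0 := hinj (he'.symm.trans he)
      exact hk0 (hkk ▸ hk)
  -- layerSel value property
  have hXprop2 : ∀ (U : Finset ℕ), ∀ j, layerSel α LV U j = 0 ∨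
      ∃ k ∈ Finset.Icc 1 P, layerSel α LV U j = α ^ k := by
    intro U j
    rcases hXval U j with h | h
    · exact Or.inl h
    · rcases hLV.2 j with h0 | ⟨k, hk, h0⟩
      · exact Or.inl (h.trans h0)
      · exact Or.inr ⟨k, hk, h.trans h0⟩
  -- counts of layerSel
  have hXcount : ∀ (U : Finset ℕ) (k : ℕ), k ∈ Finset.Icc 1 P →
      (Finset.univ.filter fun j => layerSel α LV U j = α ^ k).card
        = if k ∈ U then b k else 0 := by
    intro U k hk
    by_cases hkU : k ∈ U
    · rw [if_pos hkU, ← hLV.1 k hk]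
      congr 1
      ext j
      simp only [Finset.mem_filter, Finset.mem_univ, true_and]
      constructor
      · intro hx
        rcases hXval U j with h | h
        · exact absurd (h ▸ hx).symm (hpos k).ne'
        · exact h ▸ hx
      · intro hLVj
        rw [hXeval U j k hLVj, if_pos hkU, hLVj]
    · rw [if_neg hkU, Finset.card_eq_zero, Finset.filter_eq_empty_iff]
      intro j _ hj
      rcases hLV.2 j with h0 | ⟨k', hk', h0⟩
      · rw [hXeval0 U j h0] at hj
        exact (hpos k).ne' hj.symm
      · rw [hXeval U j k' h0] at hj
        by_cases hmem : k' ∈ U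
        · rw [if_pos hmem, h0] at hj
          exact hkU (hinj hj ▸ hmem)
        · rw [if_neg hmem] at hj
          exact (hpos k).ne' hj.symm
  -- the decomposition LV = layerSel S' + ∑ singletons
  set S' : Finset ℕ := S ∩ Finset.Icc 1 P with hS'
  have hS'sub : S' ⊆ Finset.Icc 1 P := Finset.inter_subset_right
  have hdecomp : LV = layerSel α LV S'
      + ∑ k ∈ Finset.Icc 1 P \ S', layerSel α LV {k} := by
    funext j
    rw [Pi.add_apply, Finset.sum_apply]
    rcases hLV.2 j with h0 | ⟨k0, hk0, he⟩
    · rw [hXeval0 S' j h0, h0,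
        Finset.sum_eq_zero (fun k _ => hXeval0 {k} j h0)]
      ring
    · have hsing : ∀ k ∈ Finset.Icc 1 P \ S',
          layerSel α LV {k} j = if k = k0 then LV j else 0 := by
        intro k _
        rw [hXeval {k} j k0 he]
        by_cases h : k = k0
        · rw [if_pos (by rw [h]; exact Finset.mem_singleton_self k0), if_pos h]
        · rw [if_neg (fun hh => h (Finset.mem_singleton.mp hh).symm), if_neg h]
      rw [Finset.sum_congr rfl hsing, Finset.sum_ite_eq' (Finset.Icc 1 P \ S') k0 (fun _ => LV j),
        hXeval S' j k0 he]
      by_cases hmem : k0 ∈ S'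
      · rw [if_pos hmem, if_neg (fun hh => (Finset.mem_sdiff.mp hh).2 hmem)]
        ring
      · rw [if_neg hmem, if_pos (Finset.mem_sdiff.mpr ⟨hk0, hmem⟩)]
        ring
  -- l W = l (layerSel S')
  have hWX : l W = l (layerSel α LV S') := by
    apply sn_eq_of_counts hl
    apply counts_eq_all hα W (layerSel α LV S') hW.2 (hXprop2 S')
    intro k hk
    rw [hW.1 k hk, hXcount S' k hk]
    show (if k ∈ S then b k else 0) = (if k ∈ S' then b k else 0)
    by_cases hkS : k ∈ S
    · rw [if_pos hkS, if_pos (Finset.mem_inter.mpr ⟨hkS, hk⟩)]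
    · rw [if_neg hkS, if_neg (fun hh => hkS (Finset.mem_inter.mp hh).1)]
  -- upper bound
  have hupper : l (layerSel α LV S') ≤ l LV :=
    sn_mono hl _ _ (hXnn S') (hXle S')
  -- l (layerSel {k}) = l (LVk k) for k ∈ Icc 1 P
  have hsingleq : ∀ k ∈ Finset.Icc 1 P, l (layerSel α LV {k}) = l (LVk k) := by
    intro k hk
    apply sn_eq_of_counts hl
    apply counts_eq_all hα _ _ (hXprop2 {k}) (hLVk k hk).2
    intro k' hk'
    rw [hXcount {k} k' hk', (hLVk k hk).1 k' hk']
    show (if k' ∈ ({k} : Finset ℕ) then b k' else 0) = (if k' = k then b k else 0)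
    by_cases h : k' = k
    · subst h; rw [if_pos (Finset.mem_singleton_self k'), if_pos rfl]
    · rw [if_neg (fun hh => h (Finset.mem_singleton.mp hh)), if_neg h]
  -- contributions of non-contributing layers are small
  have hsmall : ∀ k ∈ Finset.Icc 1 P \ S', l (layerSel α LV {k}) ≤ β * l LV := by
    intro k hk
    obtain ⟨hk1, hk2⟩ := Finset.mem_sdiff.mp hk
    have hkS : k ∉ S := fun h => hk2 (Finset.mem_inter.mpr ⟨h, hk1⟩)
    have := (hS k hk1).not.mp (by simpa using hkS)
    rw [hsingleq k hk1]
    linarith [not_le.mp this]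
  -- lower bound
  have hlow : l LV ≤ l (layerSel α LV S') + (P : ℝ) * β * l LV := by
    have h1 : l LV ≤ l (layerSel α LV S')
        + l (∑ k ∈ Finset.Icc 1 P \ S', layerSel α LV {k}) := by
      conv_lhs => rw [hdecomp]
      exact hl.1 _ _
    have h2 : l (∑ k ∈ Finset.Icc 1 P \ S', layerSel α LV {k})
        ≤ ∑ k ∈ Finset.Icc 1 P \ S', l (layerSel α LV {k}) := sn_sum_le hl _ _
    have h3 : ∑ k ∈ Finset.Icc 1 P \ S', l (layerSel α LV {k})
        ≤ ∑ _k ∈ Finset.Icc 1 P \ S', β * l LV := Finset.sum_le_sum hsmall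
    have h4 : ∑ _k ∈ Finset.Icc 1 P \ S', β * l LV
        = ((Finset.Icc 1 P \ S').card : ℝ) * (β * l LV) := by
      rw [Finset.sum_const, nsmul_eq_mul]
    have h5 : ((Finset.Icc 1 P \ S').card : ℝ) ≤ (P : ℝ) := by
      have : (Finset.Icc 1 P \ S').card ≤ (Finset.Icc 1 P).card :=
        Finset.card_le_card (Finset.sdiff_subset)
      rw [Nat.card_Icc] at this
      exact_mod_cast le_trans this (by omega)
    have h6 : 0 ≤ β * l LV := mul_nonneg hβ0.le (sn_nonneg hl LV)
    nlinarith
  constructor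
  · rw [hWX]
    nlinarith [sn_nonneg hl LV]
  · rw [hWX]
    exact hupper
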